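/- arXiv:1106.6194 — 3 statements merged into one kernel-verified Lean document; each statement's English description precedes it below -/
import Mathlib

section
/- Let W_i ⊆ W_j be closed sets in a topological space X and let δ(Z) = Z ∪ W_j for closed Z ⊇ W_i. Then the mediation δ preserves the pseudo-difference: δ(Z ⇐_{W_i} W) = δ(Z) ⇐_{W_j} δ(W) for all closed Z, W ⊇ W_i, where Z ⇐_{W₀} W := (closure(X \ W) ∩ Z) ∪ W₀. -/
/-- Mediations `δ(Z) = Z ∪ W_j` preserve the relative pseudo-difference
`Z ⇐_{W₀} W := (closure Wᶜ ∩ Z) ∪ W₀`: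
`δ(Z ⇐_{Wᵢ} W) = δ(Z) ⇐_{W_j} δ(W)`. -/
theorem mediation_preserves_pseudo_difference {X : Type*} [TopologicalSpace X]
    {Wi Wj Z W : Set X} (hWi : IsClosed Wi) (hWj : IsClosed Wj)
    (hZ : IsClosed Z) (hW : IsClosed W) (hij : Wi ⊆ Wj)
    (hZi : Wi ⊆ Z) (hWi' : Wi ⊆ W) :
    ((closure Wᶜ ∩ Z) ∪ Wi) ∪ Wj
      = (closure (W ∪ Wj)ᶜ ∩ (Z ∪ Wj)) ∪ Wj := by
  ext x
  simp only [Set.mem_union, Set.mem_inter_iff]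
  constructor
  · rintro ((⟨hc, hz⟩ | hi) | hj)
    · by_cases hj : x ∈ Wj
      · exact Or.inr hj
      · left
        refine ⟨?_, Or.inl hz⟩
        have : x ∈ Wjᶜ ∩ closure Wᶜ := ⟨hj, hc⟩
        have := hWj.isOpen_compl.inter_closure this
        refine closure_mono ?_ this
        rw [Set.compl_union]
        exact fun y ⟨h1, h2⟩ => ⟨h2, h1⟩
    · exact Or.inr (hij hi)
    · exact Or.inr hj
  · rintro (⟨hc, hz | hj⟩ | hj)
    · left; left
      refine ⟨closure_mono ?_ hc, hz⟩
      rw [Set.compl_union]; exact Set.inter_subset_left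
    · exact Or.inr hj
    · exact Or.inr hj
end

section
/- If (P, ∧, ∨, 0, 1, ∘) is a universale with ∘ idempotent (a ∘ a = a for all a) and with monoid identity equal to the bottom element 0, then ∘ = ∨ and hence P is a globale (join-infinitely distributive complete lattice): a ∨ ⋀ T = ⋀{a ∨ t | t ∈ T} for all a and T ⊆ P. -/
/-- A universale with idempotent operation whose monoid identity is the bottom
element has `∘ = ∨`, and is a globale: `a ∨ ⋀ T = ⋀{a ∨ t | t ∈ T}`. -/
theorem universale_idem_is_globale {P : Type*} [CompleteLattice P]
    (op : P → P → P)
    (hassoc : ∀ a b c, op (op a b) c = op a (op b c))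
    (hel : ∀ a, op ⊥ a = a) (her : ∀ a, op a ⊥ = a)
    (hidem : ∀ a, op a a = a)
    (hdistl : ∀ (b : P) (T : Set P), op b (sInf T) = sInf ((fun t => op b t) '' T))
    (hdistr : ∀ (b : P) (T : Set P), op (sInf T) b = sInf ((fun t => op t b) '' T)) :
    (∀ a b : P, op a b = a ⊔ b) ∧
    (∀ (a : P) (T : Set P), a ⊔ sInf T = sInf ((fun t => a ⊔ t) '' T)) := by
  have monol : ∀ a a' b : P, a ≤ a' → op a b ≤ op a' b := by
    intro a a' b h
    have h1 : sInf ({a, a'} : Set P) = a := by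
      rw [sInf_pair, inf_eq_left]; exact h
    have h2 := hdistr b ({a, a'} : Set P)
    rw [h1, Set.image_pair, sInf_pair] at h2
    rw [h2]; exact inf_le_right
  have monor : ∀ a b b' : P, b ≤ b' → op a b ≤ op a b' := by
    intro a b b' h
    have h1 : sInf ({b, b'} : Set P) = b := by
      rw [sInf_pair, inf_eq_left]; exact h
    have h2 := hdistl a ({b, b'} : Set P)
    rw [h1, Set.image_pair, sInf_pair] at h2
    rw [h2]; exact inf_le_right
  have key : ∀ a b : P, op a b = a ⊔ b := by
    intro a b
    apply le_antisymm
    · calc op a b ≤ op (a ⊔ b) (a ⊔ b) :=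
            le_trans (monol a (a ⊔ b) b le_sup_left) (monor _ b (a ⊔ b) le_sup_right)
        _ = a ⊔ b := hidem _
    · apply sup_le
      · calc a = op a ⊥ := (her a).symm
          _ ≤ op a b := monor a ⊥ b bot_le
      · calc b = op ⊥ b := (hel b).symm
          _ ≤ op a b := monol ⊥ a b bot_le
  refine ⟨key, fun a T => ?_⟩
  have := hdistl a T
  rw [key] at this
  rw [this]
  congr 1
  ext x
  simp only [Set.mem_image]
  exact ⟨fun ⟨t, ht, he⟩ => ⟨t, ht, by rw [← he, key]⟩,
    fun ⟨t, ht, he⟩ => ⟨t, ht, by rw [key]; exact he⟩⟩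
end

section
/- In the Brouwer algebra of closed subsets of a topological space X, the boundary operator ∂W := W ∩ closure(X \ W) (i.e., W ∧ ¬W) satisfies the Leibniz rule: ∂(W₁ ∩ W₂) = (∂W₁ ∩ W₂) ∪ (W₁ ∩ ∂W₂) for all closed W₁, W₂. -/
/-- Lawvere's Leibniz rule for the boundary operator `∂W := W ∩ closure Wᶜ`
in the Brouwer algebra of closed sets: `∂(W₁ ∩ W₂) = (∂W₁ ∩ W₂) ∪ (W₁ ∩ ∂W₂)`. -/
theorem boundary_leibniz {X : Type*} [TopologicalSpace X]
    {W₁ W₂ : Set X} (h₁ : IsClosed W₁) (h₂ : IsClosed W₂) :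
    (W₁ ∩ W₂) ∩ closure (W₁ ∩ W₂)ᶜ
      = ((W₁ ∩ closure W₁ᶜ) ∩ W₂) ∪ (W₁ ∩ (W₂ ∩ closure W₂ᶜ)) := by
  apply Set.Subset.antisymm
  · intro x ⟨⟨hx1, hx2⟩, hxc⟩
    rw [Set.compl_inter] at hxc
    rw [closure_union] at hxc
    rcases hxc with h | h
    · exact Or.inl ⟨⟨hx1, h⟩, hx2⟩
    · exact Or.inr ⟨hx1, hx2, h⟩
  · rintro x (⟨⟨hx1, hc⟩, hx2⟩ | ⟨hx1, hx2, hc⟩)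
    · exact ⟨⟨hx1, hx2⟩, closure_mono (by intro y hy; simp; tauto) hc⟩
    · exact ⟨⟨hx1, hx2⟩, closure_mono (by intro y hy; simp; tauto) hc⟩
end
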